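/- Let (R, m) be a Noetherian local ring, I ⊂ R an ideal, and x ∈ m an element such that for all n ≥ 0 the union ∪_{s>0}(I^{n+1} : m^s) equals I^{n+1} : x. Suppose moreover that I^{n+1} : x = I^n(I : x) + (0 :_R x) for all n ≥ 0. If x is a regular element of R, then setting I_n = I^n : x, we have I_n · I_m = I_{n+m} for all n, m > 0 and I_n = (I_1)^n for all n ≥ 1. -/

import Mathlib

/-!
Since `x` is regular, `(0 : x) = 0`, so the second hypothesis reads `I_{n+1} = I^n I_1`.
The first hypothesis says that `I^{n+1} : x` is the `m`-saturation of `I^{n+1}`; a saturation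
is stable under `: x`, since by Noetherianity it equals `I^{n+1} : m^N` for a single `N`.
Hence `I_1^2 ⊆ (I^2 : x) : x = I_2 = I I_1 ⊆ I_1^2`, and `I_1^2 = I I_1` propagates to
`I_1^{n+1} = I^n I_1 = I_{n+1}`.
-/

theorem pow_succ_eq_pow_mul_of_mul_self_eq {M : Type*} [Monoid M] {a b : M}
    (h : b * b = a * b) (n : ℕ) : b ^ (n + 1) = a ^ n * b := by
  induction n with
  | zero => rw [zero_add, pow_one, pow_zero, one_mul]
  | succ n ih => rw [pow_succ, ih, mul_assoc, h, ← mul_assoc, ← pow_succ]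

namespace Ideal

variable {R : Type*} [CommSemiring R]

theorem le_colon_iff_mul_le {A J K : Ideal R} : A ≤ J.colon K ↔ A * K ≤ J := by
  rw [mul_le]
  simp only [SetLike.le_def, Submodule.mem_colon, smul_eq_mul, SetLike.mem_coe]

theorem colon_colon (J K L : Ideal R) : (J.colon K).colon L = J.colon (K * L) :=
  eq_of_forall_le_iff fun A => by
    simp only [le_colon_iff_mul_le, mul_right_comm A L K, mul_assoc]

theorem colon_mul_colon_le (J₁ J₂ K₁ K₂ : Ideal R) :
    J₁.colon K₁ * J₂.colon K₂ ≤ (J₁ * J₂).colon (K₁ * K₂) := by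
  rw [le_colon_iff_mul_le, mul_mul_mul_comm]
  exact mul_mono (le_colon_iff_mul_le.mp le_rfl) (le_colon_iff_mul_le.mp le_rfl)

theorem bot_colon_span_singleton_of_mem_nonZeroDivisors {x : R} (hx : x ∈ nonZeroDivisors R) :
    (⊥ : Ideal R).colon (span {x}) = ⊥ := by
  ext r
  rw [mem_colon_span_singleton, mem_bot, mem_bot, mul_right_mem_nonZeroDivisors_eq_zero_iff hx]

theorem exists_iSup_colon_pow_eq [IsNoetherianRing R] (J M : Ideal R) :
    ∃ N, ⨆ s : ℕ, J.colon (M ^ (s + 1) : Ideal R) = J.colon (M ^ (N + 1) : Ideal R) :=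
  ⟨_, WellFoundedGT.iSup_eq_monotonicSequenceLimit
    ⟨fun s => J.colon (M ^ (s + 1) : Ideal R),
      fun _ _ _ => Submodule.colon_mono le_rfl (pow_le_pow_right (by omega))⟩⟩

theorem colon_colon_span_singleton_of_iSup_colon_pow_eq [IsNoetherianRing R] {J M : Ideal R}
    {x : R} (hsat : ⨆ s : ℕ, J.colon (M ^ (s + 1) : Ideal R) = J.colon (span {x})) :
    (J.colon (span {x})).colon (span {x}) = J.colon (span {x}) := by
  obtain ⟨N, hN⟩ := exists_iSup_colon_pow_eq J M
  have hx : J.colon (span {x}) = J.colon (M ^ (N + 1) : Ideal R) := hsat.symm.trans hN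
  refine le_antisymm ?_ le_colon
  calc (J.colon (span {x})).colon (span {x})
      = (J.colon (M ^ (N + 1) : Ideal R)).colon (M ^ (N + 1) : Ideal R) := by
        rw [hx, colon_colon, mul_comm, ← colon_colon, hx]
    _ = J.colon (M ^ (2 * N + 1 + 1) : Ideal R) := by
        rw [colon_colon, ← pow_add, show N + 1 + (N + 1) = 2 * N + 1 + 1 by ring]
    _ ≤ J.colon (span {x}) := hsat ▸ le_iSup (fun s : ℕ => J.colon (M ^ (s + 1) : Ideal R)) _

end Ideal

open IsLocalRing in
theorem saturation_powers_multiplicative_general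
    (R : Type*) [CommRing R] [IsNoetherianRing R] [IsLocalRing R]
    (I : Ideal R) (x : R)
    (hreg : x ∈ nonZeroDivisors R)
    (hsat : ∀ n : ℕ,
      (⨆ s : ℕ, (I ^ (n + 1)).colon ((maximalIdeal R ^ (s + 1) : Ideal R))) =
        (I ^ (n + 1)).colon (Ideal.span {x}))
    (hcolon : ∀ n : ℕ,
      (I ^ (n + 1)).colon (Ideal.span {x}) =
        I ^ n * (I.colon (Ideal.span {x})) + (⊥ : Ideal R).colon (Ideal.span {x})) :
    (∀ n m : ℕ, 0 < n → 0 < m →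
        ((I ^ n).colon (Ideal.span {x})) * ((I ^ m).colon (Ideal.span {x})) =
          (I ^ (n + m)).colon (Ideal.span {x})) ∧
      ∀ n : ℕ, 1 ≤ n →
        (I ^ n).colon (Ideal.span {x}) = ((I ^ 1).colon (Ideal.span {x})) ^ n := by
  set S := Ideal.span {x}
  set K := I.colon S
  have hsucc (n : ℕ) : (I ^ (n + 1)).colon S = I ^ n * K := by
    rw [hcolon n, Ideal.bot_colon_span_singleton_of_mem_nonZeroDivisors hreg, ← Ideal.zero_eq_bot,
      add_zero]
  have hsq : K * K = I * K := by
    refine le_antisymm ?_ (Ideal.mul_mono_left Ideal.le_colon)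
    calc K * K ≤ ((I ^ 2).colon S).colon S := by
          rw [Ideal.colon_colon, sq]; exact Ideal.colon_mul_colon_le I I S S
      _ = I * K := by
          rw [Ideal.colon_colon_span_singleton_of_iSup_colon_pow_eq (hsat 1), hsucc 1, pow_one]
  have hpow (n : ℕ) (hn : 1 ≤ n) : (I ^ n).colon S = K ^ n := by
    obtain ⟨k, rfl⟩ := Nat.exists_eq_add_of_le' hn
    rw [hsucc, pow_succ_eq_pow_mul_of_mul_self_eq hsq]
  refine ⟨fun n m hn hm => ?_, fun n hn => by rw [pow_one, hpow n hn]⟩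
  rw [hpow n hn, hpow m hm, hpow (n + m) (by omega), pow_add]

open IsLocalRing in
/-- with `I_n = I^n : x`, the hypotheses give `I_n I_m = I_{n+m}` and
`I_n = I_1^n`. -/
theorem saturation_powers_multiplicative
    (R : Type*) [CommRing R] [IsNoetherianRing R] [IsLocalRing R]
    (I : Ideal R) (x : R) (hxm : x ∈ maximalIdeal R)
    (hreg : x ∈ nonZeroDivisors R)
    (hsat : ∀ n : ℕ,
      (⨆ s : ℕ, (I ^ (n + 1)).colon ((maximalIdeal R ^ (s + 1) : Ideal R))) =
        (I ^ (n + 1)).colon (Ideal.span {x}))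
    (hcolon : ∀ n : ℕ,
      (I ^ (n + 1)).colon (Ideal.span {x}) =
        I ^ n * (I.colon (Ideal.span {x})) + (⊥ : Ideal R).colon (Ideal.span {x})) :
    (∀ n m : ℕ, 0 < n → 0 < m →
        ((I ^ n).colon (Ideal.span {x})) * ((I ^ m).colon (Ideal.span {x})) =
          (I ^ (n + m)).colon (Ideal.span {x})) ∧
      ∀ n : ℕ, 1 ≤ n →
        (I ^ n).colon (Ideal.span {x}) = ((I ^ 1).colon (Ideal.span {x})) ^ n :=
  saturation_powers_multiplicative_general R I x hreg hsat hcolon
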